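/- Let L = P^m + a_{m−1}P^{m−1} + ⋯ + a_0 + a_{−1}P^{−1} + ⋯ be a Laurent series in P^{−1} with smooth coefficients, φ(T) a smooth function independent of P, and L̃ := e^{−ad φ}L. Then for every time variable T_q, ∂_{T_q}L̃ − {(L̃^q)_{≥1}, L̃} = e^{−ad φ}( ∂_{T_q}L − {(L^q)_+, L} ) − { ∂_{T_q}φ − (L^q)_+|_{P=φ_X}, L̃ }, where (L^q)_+|_{P=φ_X} denotes the polynomial part of L^q evaluated at P = φ_X. -/

import Mathlib

namespace DMKP

/-- Coefficient functions of a formal Laurent series in `P⁻¹` with time variables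
`T = (T₁, …, T_N)`: `A n` is the coefficient of `P^n`. -/
abbrev Coeffs (N : ℕ) := ℤ → (Fin N → ℝ) → ℝ

variable {N : ℕ}

/-- Partial derivative in the direction of the `q`-th time variable. -/
noncomputable def pd (q : Fin N) (f : (Fin N → ℝ) → ℝ) : (Fin N → ℝ) → ℝ :=
  fun x => fderiv ℝ f x (Pi.single q 1)

/-- Finitely many positive powers of `P`. -/
def BddPow (A : Coeffs N) : Prop := ∃ m : ℤ, ∀ n : ℤ, m < n → A n = 0

/-- All coefficients are smooth functions of the time variables. -/
def SmoothCoeffs (A : Coeffs N) : Prop := ∀ n : ℤ, ContDiff ℝ (⊤ : ℕ∞) (A n)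

/-- A Laurent series in `P⁻¹` with smooth coefficients. -/
def IsLaurent (A : Coeffs N) : Prop := BddPow A ∧ SmoothCoeffs A

/-- Termwise `∂_P`. -/
def dP (A : Coeffs N) : Coeffs N := fun n x => ((n + 1 : ℤ) : ℝ) * A (n + 1) x

/-- Termwise `∂_{T_q}`. -/
noncomputable def dT (q : Fin N) (A : Coeffs N) : Coeffs N := fun n => pd q (A n)

/-- Termwise `∂_X`, where `X = T₁`. -/
noncomputable def dX [NeZero N] (A : Coeffs N) : Coeffs N := dT 0 A

/-- Termwise product of Laurent series. -/
noncomputable def mul (A B : Coeffs N) : Coeffs N := fun n x => ∑' i : ℤ, A i x * B (n - i) x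

/-- The Poisson bracket `{f,g} = f_P g_X - f_X g_P`. -/
noncomputable def pb [NeZero N] (A B : Coeffs N) : Coeffs N :=
  fun n x => mul (dP A) (dX B) n x - mul (dX A) (dP B) n x

/-- Truncation keeping only powers `P^n` with `n ≥ k`. -/
def truncGe (k : ℤ) (A : Coeffs N) : Coeffs N := fun n => if k ≤ n then A n else 0

/-- Truncation keeping only powers `P^n` with `n ≤ k`. -/
def truncLe (k : ℤ) (A : Coeffs N) : Coeffs N := fun n => if n ≤ k then A n else 0

/-- The residue: coefficient of `P⁻¹`. -/
def res (A : Coeffs N) : (Fin N → ℝ) → ℝ := A (-1)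

/-- The constant Laurent series `1`. -/
def one' : Coeffs N := fun n => if n = 0 then (fun _ => (1 : ℝ)) else 0

/-- `powC A q` is the `q`-th power `A^q`. -/
noncomputable def powC (A : Coeffs N) : ℕ → Coeffs N
  | 0 => one'
  | q + 1 => mul A (powC A q)

/-- `e^{-ad φ} A = Σ_{k≥0} (1/k!) (φ_X)^k ∂_P^k A`. -/
noncomputable def expAdNeg [NeZero N] (φ : (Fin N → ℝ) → ℝ) (A : Coeffs N) : Coeffs N :=
  fun n x => ∑' k : ℕ, (pd 0 φ x) ^ k / (Nat.factorial k : ℝ) * (dP^[k] A) n x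

/-- `e^{ad φ} A = Σ_{k≥0} (1/k!) (-φ_X)^k ∂_P^k A`. -/
noncomputable def expAdPos [NeZero N] (φ : (Fin N → ℝ) → ℝ) (A : Coeffs N) : Coeffs N :=
  fun n x => ∑' k : ℕ, (-(pd 0 φ x)) ^ k / (Nat.factorial k : ℝ) * (dP^[k] A) n x

/-- A `P`-independent function viewed as a Laurent series concentrated at `P^0`. -/
def const (φ : (Fin N → ℝ) → ℝ) : Coeffs N := fun n => if n = 0 then φ else 0

/-- Evaluation of the polynomial (non-negative) part of `A` at `P = φ_X`. -/
noncomputable def evalAtPhiX [NeZero N] (A : Coeffs N) (φ : (Fin N → ℝ) → ℝ) :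
    (Fin N → ℝ) → ℝ :=
  fun x => ∑' k : ℕ, A (k : ℤ) x * (pd 0 φ x) ^ k

/-- The shape `λ = P + U₂ P⁻¹ + U₃ P⁻² + ⋯` of the dKP Lax function. -/
def IsDKPShape (lam : Coeffs N) : Prop :=
  (lam 1 = fun _ => (1 : ℝ)) ∧ lam 0 = 0 ∧ ∀ n : ℤ, 2 ≤ n → lam n = 0

/-- The shape `μ = P + V₀ + V₁ P⁻¹ + ⋯` of the dmKP Lax function. -/
def IsDMKPShape (mu : Coeffs N) : Prop :=
  (mu 1 = fun _ => (1 : ℝ)) ∧ ∀ n : ℤ, 2 ≤ n → mu n = 0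




section Aux
open Finset

section PD

variable {f g : (Fin N → ℝ) → ℝ} {r : Fin N} {x : Fin N → ℝ}

lemma contDiff_pd (hf : ContDiff ℝ (⊤ : ℕ∞) f) (r : Fin N) : ContDiff ℝ (⊤ : ℕ∞) (pd r f) :=
  (hf.fderiv_right (by simp)).clm_apply contDiff_const

lemma pd_zero (r : Fin N) (x : Fin N → ℝ) : pd r (0 : (Fin N → ℝ) → ℝ) x = 0 := by
  have : (0 : (Fin N → ℝ) → ℝ) = fun _ => (0:ℝ) := rfl
  simp [pd, this, fderiv_const]

lemma pd_const (c : ℝ) (r : Fin N) (x : Fin N → ℝ) : pd r (fun _ => c) x = 0 := by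
  simp [pd, fderiv_const]

lemma pd_sub (hf : DifferentiableAt ℝ f x) (hg : DifferentiableAt ℝ g x) :
    pd r (fun y => f y - g y) x = pd r f x - pd r g x := by
  simp [pd, fderiv_fun_sub hf hg]

lemma pd_mul (hf : DifferentiableAt ℝ f x) (hg : DifferentiableAt ℝ g x) :
    pd r (fun y => f y * g y) x = pd r f x * g x + f x * pd r g x := by
  simp only [pd, fderiv_fun_mul hf hg]
  simp only [ContinuousLinearMap.add_apply, ContinuousLinearMap.smul_apply, smul_eq_mul]
  ring

lemma pd_const_mul (hf : DifferentiableAt ℝ f x) (c : ℝ) :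
    pd r (fun y => c * f y) x = c * pd r f x := by
  simp [pd, fderiv_const_mul hf c]

lemma pd_sum {ι : Type*} (s : Finset ι) (F : ι → (Fin N → ℝ) → ℝ)
    (hF : ∀ i ∈ s, DifferentiableAt ℝ (F i) x) :
    pd r (fun y => ∑ i ∈ s, F i y) x = ∑ i ∈ s, pd r (F i) x := by
  simp [pd, fderiv_fun_sum hF]

lemma pd_pow (k : ℕ) (hf : DifferentiableAt ℝ f x) :
    pd r (fun y => f y ^ (k + 1)) x = (k + 1 : ℝ) * f x ^ k * pd r f x := by
  induction k with
  | zero => simp [pow_succ, pow_zero]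
  | succ k ih =>
      have h1 : DifferentiableAt ℝ (fun y => f y ^ (k+1)) x := hf.pow _
      have : (fun y => f y ^ (k + 1 + 1)) = fun y => f y ^ (k+1) * f y := by
        funext y; ring
      rw [this, pd_mul h1 hf, ih]
      push_cast
      ring

lemma pd_comm (hf : ContDiff ℝ (⊤ : ℕ∞) f) (r r' : Fin N) (x : Fin N → ℝ) :
    pd r (pd r' f) x = pd r' (pd r f) x := by
  have hsymm : IsSymmSndFDerivAt ℝ f x :=
    (hf.contDiffAt).isSymmSndFDerivAt (by rw [minSmoothness_of_isRCLikeNormedField]; exact WithTop.coe_le_coe.mpr le_top)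
  have hdf : DifferentiableAt ℝ (fderiv ℝ f) x :=
    ((hf.fderiv_right (m := 1) (by exact WithTop.coe_le_coe.mpr le_top)).differentiable one_ne_zero) x
  have key : ∀ v w : Fin N → ℝ,
      fderiv ℝ (fun y => fderiv ℝ f y v) x w = fderiv ℝ (fderiv ℝ f) x w v := by
    intro v w
    have : (fun y => fderiv ℝ f y v) = fun y => (fderiv ℝ f y) ((fun _ => v) y) := rfl
    rw [this, fderiv_clm_apply hdf (differentiableAt_const v)]
    simp
  unfold pd
  rw [key, key, hsymm]

end PD

/-- Rising-factorial coefficient `(n+1)(n+2)⋯(n+k)`. -/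
noncomputable def cc (n : ℤ) (k : ℕ) : ℝ := ∏ j ∈ Finset.range k, ((n : ℝ) + j + 1)

lemma cc_zero (n : ℤ) : cc n 0 = 1 := by simp [cc]

lemma cc_succ (n : ℤ) (k : ℕ) : cc n (k + 1) = cc n k * ((n : ℝ) + k + 1) := by
  simp [cc, Finset.prod_range_succ]

lemma cc_succ' (n : ℤ) (k : ℕ) : cc n (k + 1) = ((n : ℝ) + 1) * cc (n + 1) k := by
  unfold cc
  rw [Finset.prod_range_succ']
  push_cast
  rw [mul_comm]
  congr 1
  · ring_nf
  · apply Finset.prod_congr rfl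
    intro j _
    push_cast
    ring

lemma cc_eq_zero {n : ℤ} {k : ℕ} (hn : n < 0) (hk : 0 ≤ n + k) : cc n k = 0 := by
  have h1 : ((-n-1).toNat : ℤ) = -n-1 := Int.toNat_of_nonneg (by omega)
  have h2 : (-n-1).toNat < k := by
    have : ((-n-1).toNat : ℤ) < (k : ℤ) := by omega
    exact_mod_cast this
  apply Finset.prod_eq_zero (Finset.mem_range.mpr h2)
  have : (((-n-1).toNat : ℕ) : ℝ) = ((-n-1 : ℤ) : ℝ) := by
    exact_mod_cast congrArg (fun z : ℤ => (z : ℝ)) h1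
  rw [this]
  push_cast
  ring

lemma cc_nat (k : ℕ) : cc 0 k = (Nat.factorial k : ℝ) := by
  induction k with
  | zero => simp [cc]
  | succ k ih => rw [cc_succ, ih, Nat.factorial_succ]; push_cast; ring

lemma dP_iter (A : Coeffs N) (k : ℕ) (n : ℤ) (x : Fin N → ℝ) :
    (dP^[k] A) n x = cc n k * A (n + k) x := by
  induction k generalizing n with
  | zero => simp [cc_zero]
  | succ k ih =>
      rw [Function.iterate_succ_apply']
      show ((n + 1 : ℤ) : ℝ) * (dP^[k] A) (n + 1) x = _
      rw [ih (n + 1), cc_succ']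
      have hidx : n + 1 + (k : ℤ) = n + ((k : ℕ) + 1 : ℕ) := by push_cast; ring
      rw [hidx]
      push_cast
      ring


end Aux
end DMKP
-- Part 2 : UBd machinery
namespace DMKP
section Aux2
open Finset
variable {N : ℕ}

/-- Upper bound on powers. -/
def UBd (A : Coeffs N) (a : ℤ) : Prop := ∀ n : ℤ, a < n → A n = 0

lemma ubd_mono {A : Coeffs N} {a b : ℤ} (h : UBd A a) (hab : a ≤ b) : UBd A b :=
  fun n hn => h n (lt_of_le_of_lt hab hn)

lemma ubd_apply {A : Coeffs N} {a : ℤ} (h : UBd A a) {n : ℤ} (hn : a < n) (x : Fin N → ℝ) :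
    A n x = 0 := by rw [h n hn]; rfl

lemma ubd_dP {A : Coeffs N} {a : ℤ} (h : UBd A a) : UBd (dP A) a := by
  intro n hn
  funext x
  have : A (n+1) = 0 := h (n+1) (by omega)
  simp [DMKP.dP, this]

lemma ubd_dP_iter {A : Coeffs N} {a : ℤ} (h : UBd A a) (k : ℕ) : UBd (dP^[k] A) a := by
  induction k with
  | zero => exact h
  | succ k ih => rw [Function.iterate_succ_apply']; exact ubd_dP ih

lemma ubd_dT {A : Coeffs N} {a : ℤ} (h : UBd A a) (q : Fin N) : UBd (dT q A) a := by
  intro n hn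
  funext x
  have : A n = 0 := h n hn
  simp [DMKP.dT, this, pd_zero]

lemma ubd_truncGe {A : Coeffs N} {a : ℤ} (h : UBd A a) (k : ℤ) : UBd (truncGe k A) a := by
  intro n hn
  unfold DMKP.truncGe
  rw [h n hn]
  simp

lemma ubd_const (f : (Fin N → ℝ) → ℝ) : UBd (const f) 0 := by
  intro n hn
  unfold DMKP.const
  rw [if_neg (by omega)]

lemma ubd_one' : UBd (one' : Coeffs N) 0 := by
  intro n hn
  unfold DMKP.one'
  rw [if_neg (by omega)]

lemma ubd_mul {A B : Coeffs N} {a b : ℤ} (hA : UBd A a) (hB : UBd B b) :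
    UBd (mul A B) (a + b) := by
  intro n hn
  funext x
  unfold DMKP.mul
  have : ∀ i : ℤ, A i x * B (n - i) x = 0 := by
    intro i
    by_cases hi : a < i
    · rw [ubd_apply hA hi]; ring
    · rw [ubd_apply hB (n := n - i) (by omega)]; ring
  simp only [this]
  exact tsum_zero

lemma ubd_expAdNeg [NeZero N] {A : Coeffs N} {a : ℤ} (h : UBd A a)
    (φ : (Fin N → ℝ) → ℝ) : UBd (expAdNeg φ A) a := by
  intro n hn
  funext x
  unfold DMKP.expAdNeg
  have : ∀ k : ℕ, (pd 0 φ x) ^ k / (Nat.factorial k : ℝ) * (dP^[k] A) n x = 0 := by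
    intro k
    rw [dP_iter, (ubd_apply h (n := n + k) (by omega))]
    ring
  simp only [this]
  exact tsum_zero

lemma ubd_powC {A : Coeffs N} {a : ℤ} (h : UBd A a) (k : ℕ) :
    UBd (powC A k) ((k : ℤ) * a) := by
  induction k with
  | zero => exact ubd_mono ubd_one' (by simp)
  | succ k ih =>
      have := ubd_mul h ih
      exact ubd_mono this (by push_cast; ring_nf; exact le_refl _)

lemma ubd_sub {A B : Coeffs N} {a : ℤ} (hA : UBd A a) (hB : UBd B a) :
    UBd (fun n x => A n x - B n x) a := by
  intro n hn
  funext x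
  show A n x - B n x = 0
  rw [ubd_apply hA hn, ubd_apply hB hn]
  ring

/-- Summability of the product terms. -/
lemma summable_mul {A B : Coeffs N} {a b : ℤ} (hA : UBd A a) (hB : UBd B b)
    (n : ℤ) (x : Fin N → ℝ) : Summable (fun i : ℤ => A i x * B (n - i) x) := by
  apply summable_of_ne_finset_zero (s := Finset.Icc (n - b) a)
  intro i hi
  rw [Finset.mem_Icc] at hi
  push_neg at hi
  by_cases h1 : a < i
  · rw [ubd_apply hA h1]; ring
  · rw [ubd_apply hB (n := n - i) (by omega)]; ring

lemma mul_eq_sum {A B : Coeffs N} {a b : ℤ} (hA : UBd A a) (hB : UBd B b)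
    (n : ℤ) (x : Fin N → ℝ) :
    mul A B n x = ∑ i ∈ Finset.Icc (n - b) a, A i x * B (n - i) x := by
  unfold DMKP.mul
  apply tsum_eq_sum
  intro i hi
  rw [Finset.mem_Icc] at hi
  push_neg at hi
  by_cases h1 : a < i
  · rw [ubd_apply hA h1]; ring
  · rw [ubd_apply hB (n := n - i) (by omega)]; ring

lemma mul_congr {A A' B B' : Coeffs N} (hA : ∀ n x, A n x = A' n x)
    (hB : ∀ n x, B n x = B' n x) (n : ℤ) (x : Fin N → ℝ) :
    mul A B n x = mul A' B' n x := by
  unfold DMKP.mul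
  exact tsum_congr fun i => by rw [hA, hB]

end Aux2
end DMKP
-- Part 3 : smoothness + expAd sum formulas
namespace DMKP
section Aux3
open Finset
variable {N : ℕ}

lemma mul_fun_eq {A B : Coeffs N} {a b : ℤ} (hA : UBd A a) (hB : UBd B b) (n : ℤ) :
    mul A B n = fun x => ∑ i ∈ Finset.Icc (n - b) a, A i x * B (n - i) x :=
  funext fun x => mul_eq_sum hA hB n x

lemma sm_zero : ContDiff ℝ (⊤ : ℕ∞) (0 : (Fin N → ℝ) → ℝ) := contDiff_const

lemma sm_mul {A B : Coeffs N} {a b : ℤ} (hA : UBd A a) (hB : UBd B b)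
    (sA : SmoothCoeffs A) (sB : SmoothCoeffs B) : SmoothCoeffs (mul A B) := by
  intro n
  rw [mul_fun_eq hA hB n]
  exact ContDiff.sum fun i _ => (sA i).mul (sB (n - i))

lemma sm_truncGe {A : Coeffs N} (sA : SmoothCoeffs A) (k : ℤ) :
    SmoothCoeffs (truncGe k A) := by
  intro n
  unfold truncGe
  split
  · exact sA n
  · exact sm_zero

lemma sm_const {f : (Fin N → ℝ) → ℝ} (hf : ContDiff ℝ (⊤ : ℕ∞) f) : SmoothCoeffs (const f) := by
  intro n
  unfold const
  split
  · exact hf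
  · exact sm_zero

lemma sm_one' : SmoothCoeffs (one' : Coeffs N) := by
  intro n
  unfold one'
  split
  · exact contDiff_const
  · exact sm_zero

lemma sm_powC {A : Coeffs N} {a : ℤ} (hA : UBd A a) (sA : SmoothCoeffs A) (k : ℕ) :
    SmoothCoeffs (powC A k) := by
  induction k with
  | zero => exact sm_one'
  | succ k ih => exact sm_mul hA (ubd_powC hA k) sA ih

/-- Flexible finite-sum formula for `expAdNeg`, in the `cc`-normal form. -/
lemma expAd_eq_sum [NeZero N] {A : Coeffs N} {a : ℤ} (hA : UBd A a)
    (φ : (Fin N → ℝ) → ℝ) (n : ℤ) {T : ℕ} (hT : ∀ k : ℕ, T ≤ k → a < n + k) :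
    expAdNeg φ A n = fun x => ∑ k ∈ Finset.range T,
      cc n k / (Nat.factorial k : ℝ) * ((pd 0 φ x) ^ k * A (n + k) x) := by
  funext x
  unfold expAdNeg
  have h1 : ∀ k : ℕ, (pd 0 φ x) ^ k / (Nat.factorial k : ℝ) * (dP^[k] A) n x
      = cc n k / (Nat.factorial k : ℝ) * ((pd 0 φ x) ^ k * A (n + k) x) := by
    intro k
    rw [dP_iter]
    ring
  rw [tsum_congr h1]
  apply tsum_eq_sum
  intro k hk
  rw [Finset.mem_range, not_lt] at hk
  rw [ubd_apply hA (hT k hk)]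
  ring

lemma expAd_T {a n : ℤ} : ∀ k : ℕ, (a - n).toNat + 1 ≤ k → a < n + k := by
  intro k hk
  have h1 : a - n ≤ ((a - n).toNat : ℤ) := Int.self_le_toNat _
  omega

/-- Default-range version. -/
lemma expAd_eq_sum' [NeZero N] {A : Coeffs N} {a : ℤ} (hA : UBd A a)
    (φ : (Fin N → ℝ) → ℝ) (n : ℤ) :
    expAdNeg φ A n = fun x => ∑ k ∈ Finset.range ((a - n).toNat + 1),
      cc n k / (Nat.factorial k : ℝ) * ((pd 0 φ x) ^ k * A (n + k) x) :=
  expAd_eq_sum hA φ n expAd_T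

lemma sm_expAdNeg [NeZero N] {A : Coeffs N} {a : ℤ} (hA : UBd A a)
    (sA : SmoothCoeffs A) {φ : (Fin N → ℝ) → ℝ} (hφ : ContDiff ℝ (⊤ : ℕ∞) φ) :
    SmoothCoeffs (expAdNeg φ A) := by
  intro n
  rw [expAd_eq_sum' hA φ n]
  apply ContDiff.sum
  intro k _
  exact contDiff_const.mul (((contDiff_pd hφ 0).pow k).mul (sA (n + k)))

lemma sm_evalAtPhiX [NeZero N] {A : Coeffs N} {a : ℤ} (hA : UBd A a)
    (sA : SmoothCoeffs A) {φ : (Fin N → ℝ) → ℝ} (hφ : ContDiff ℝ (⊤ : ℕ∞) φ) :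
    ContDiff ℝ (⊤ : ℕ∞) (evalAtPhiX A φ) := by
  have h : evalAtPhiX A φ = fun x => ∑ k ∈ Finset.range (a.toNat + 1),
      A (k : ℤ) x * (pd 0 φ x) ^ k := by
    funext x
    unfold evalAtPhiX
    apply tsum_eq_sum
    intro k hk
    rw [Finset.mem_range, not_lt] at hk
    have : a < (k : ℤ) := by
      have := Int.self_le_toNat a
      omega
    rw [ubd_apply hA this]
    ring
  rw [h]
  exact ContDiff.sum fun k _ => (sA _).mul ((contDiff_pd hφ 0).pow k)

end Aux3
end DMKP
-- Part 4 : expAd and derivatives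
namespace DMKP
section Aux4
open Finset
variable {N : ℕ} [NeZero N]

lemma ubd_dP' {A : Coeffs N} {a : ℤ} (hA : UBd A a) : UBd (dP A) (a - 1) := by
  intro n hn
  funext x
  have : A (n + 1) = 0 := hA (n + 1) (by omega)
  simp [dP, this]

lemma expAd_sub {A B : Coeffs N} {a : ℤ} (hA : UBd A a) (hB : UBd B a)
    (φ : (Fin N → ℝ) → ℝ) (n : ℤ) (x : Fin N → ℝ) :
    expAdNeg φ (fun n x => A n x - B n x) n x
      = expAdNeg φ A n x - expAdNeg φ B n x := by
  have hC : UBd (fun n x => A n x - B n x) a := ubd_sub hA hB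
  rw [congrFun (expAd_eq_sum' hC φ n) x, congrFun (expAd_eq_sum' hA φ n) x,
    congrFun (expAd_eq_sum' hB φ n) x, ← Finset.sum_sub_distrib]
  apply Finset.sum_congr rfl
  intro k _
  ring

lemma expAd_dP (φ : (Fin N → ℝ) → ℝ) (A : Coeffs N) (n : ℤ) (x : Fin N → ℝ) :
    expAdNeg φ (dP A) n x = ((n + 1 : ℤ) : ℝ) * expAdNeg φ A (n + 1) x := by
  unfold expAdNeg
  have h1 : ∀ k : ℕ, (pd 0 φ x) ^ k / (Nat.factorial k : ℝ) * (dP^[k] (dP A)) n x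
      = ((n + 1 : ℤ) : ℝ) * ((pd 0 φ x) ^ k / (Nat.factorial k : ℝ) * (dP^[k] A) (n+1) x) := by
    intro k
    have h2 : (dP^[k] (dP A)) n x = dP (dP^[k] A) n x := by
      rw [← Function.iterate_succ_apply, Function.iterate_succ_apply']
    rw [h2]
    show (pd 0 φ x) ^ k / (Nat.factorial k : ℝ) * (((n + 1 : ℤ) : ℝ) * (dP^[k] A) (n+1) x) = _
    ring
  rw [tsum_congr h1, tsum_mul_left]

lemma dP_expAd (φ : (Fin N → ℝ) → ℝ) (A : Coeffs N) (n : ℤ) (x : Fin N → ℝ) :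
    dP (expAdNeg φ A) n x = expAdNeg φ (dP A) n x := by
  rw [expAd_dP]; rfl

/-- Key derivative formula: `∂_{T_r} (e^{-ad φ}A) = e^{-ad φ}(∂_{T_r}A) + (∂_{T_r}φ_X)·e^{-ad φ}(∂_P A)`. -/
lemma pd_expAd {A : Coeffs N} {a : ℤ} (hA : UBd A a) (sA : SmoothCoeffs A)
    {φ : (Fin N → ℝ) → ℝ} (hφ : ContDiff ℝ (⊤ : ℕ∞) φ) (r : Fin N) (n : ℤ) (x : Fin N → ℝ) :
    pd r (expAdNeg φ A n) x
      = expAdNeg φ (dT r A) n x + pd r (pd 0 φ) x * expAdNeg φ (dP A) n x := by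
  set s : (Fin N → ℝ) → ℝ := pd 0 φ with hs_def
  have hs : ContDiff ℝ (⊤ : ℕ∞) s := contDiff_pd hφ 0
  have ds : ∀ y, DifferentiableAt ℝ s y := fun y => (hs.differentiable (by simp)).differentiableAt
  have dA : ∀ (m : ℤ) (y : Fin N → ℝ), DifferentiableAt ℝ (A m) y :=
    fun m y => ((sA m).differentiable (by simp)).differentiableAt
  set T0 := (a - n).toNat with hT0
  -- LHS expansion
  rw [expAd_eq_sum' hA φ n]
  rw [pd_sum (r := r) (Finset.range (T0 + 1))
    (fun k y => cc n k / (Nat.factorial k : ℝ) * (s y ^ k * A (n + k) y))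
    (fun k _ => (((ds x).pow k).mul (dA (n + k) x)).const_mul _)]
  have hterm : ∀ k ∈ Finset.range (T0 + 1),
      pd r (fun y => cc n k / (Nat.factorial k : ℝ) * (s y ^ k * A (n + k) y)) x
      = cc n k / (Nat.factorial k : ℝ) * (pd r (fun y => s y ^ k) x * A (n + k) x)
        + cc n k / (Nat.factorial k : ℝ) * (s x ^ k * pd r (A (n + k)) x) := by
    intro k _
    rw [pd_const_mul (f := fun y => s y ^ k * A (n + k) y) (((ds x).pow k).mul (dA (n + k) x)) _,
      pd_mul (f := fun y => s y ^ k) ((ds x).pow k) (dA (n + k) x)]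
    ring
  rw [Finset.sum_congr rfl hterm, Finset.sum_add_distrib]
  -- second piece = expAd (dT r A)
  have hpiece2 : ∑ k ∈ Finset.range (T0 + 1),
      cc n k / (Nat.factorial k : ℝ) * (s x ^ k * pd r (A (n + k)) x)
      = expAdNeg φ (dT r A) n x := by
    rw [congrFun (expAd_eq_sum' (ubd_dT hA r) φ n) x]
    rfl
  -- first piece = pd r s x * expAd (dP A)
  have hpiece1 : ∑ k ∈ Finset.range (T0 + 1),
      cc n k / (Nat.factorial k : ℝ) * (pd r (fun y => s y ^ k) x * A (n + k) x)
      = pd r s x * expAdNeg φ (dP A) n x := by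
    have hTdp : ∀ k : ℕ, T0 ≤ k → a - 1 < n + k := by
      intro k hk
      have := Int.self_le_toNat (a - n)
      omega
    rw [congrFun (expAd_eq_sum (ubd_dP' hA) φ n hTdp) x]
    rw [Finset.sum_range_succ']
    have hzero : cc n 0 / (Nat.factorial 0 : ℝ) * (pd r (fun y => s y ^ 0) x * A (n + (0:ℕ)) x) = 0 := by
      have : pd r (fun y => s y ^ 0) x = 0 := by
        have h0 : (fun y => s y ^ 0) = fun _ : Fin N → ℝ => (1:ℝ) := by funext y; simp
        rw [h0, pd_const]
      rw [this]
      ring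
    rw [hzero, add_zero, Finset.mul_sum]
    apply Finset.sum_congr rfl
    intro j _
    rw [pd_pow j (ds x)]
    have hidx : (n + ((j : ℕ) + 1 : ℕ) : ℤ) = n + j + 1 := by push_cast; ring
    have hdp : dP A (n + (j:ℕ)) x = ((n : ℝ) + j + 1) * A (n + j + 1) x := by
      show ((n + (j:ℕ) + 1 : ℤ) : ℝ) * A (n + (j:ℕ) + 1) x = _
      push_cast
      ring_nf
    rw [hidx, hdp, cc_succ, Nat.factorial_succ]
    have hj : ((j:ℝ) + 1) ≠ 0 := by positivity
    have hfac : (Nat.factorial j : ℝ) ≠ 0 := Nat.cast_ne_zero.mpr (Nat.factorial_ne_zero j)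
    push_cast
    field_simp
    ring
  rw [hpiece1, hpiece2]
  ring
end Aux4
end DMKP
-- Part 5 : multiplicativity
namespace DMKP
section Aux5
open Finset
variable {N : ℕ}

lemma dP_mul [NeZero N] {A B : Coeffs N} {a b : ℤ} (hA : UBd A a) (hB : UBd B b)
    (n : ℤ) (x : Fin N → ℝ) :
    dP (mul A B) n x = mul (dP A) B n x + mul A (dP B) n x := by
  set f : ℤ → ℝ := fun j => ((j : ℤ) : ℝ) * A j x * B (n + 1 - j) x with hf
  set g : ℤ → ℝ := fun j => ((n + 1 - j : ℤ) : ℝ) * A j x * B (n + 1 - j) x with hg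
  have hsf : Summable f := by
    apply summable_of_ne_finset_zero (s := Finset.Icc (n + 1 - b) a)
    intro j hj
    rw [Finset.mem_Icc] at hj; push_neg at hj
    by_cases h1 : a < j
    · rw [hf]; simp only; rw [ubd_apply hA h1]; ring
    · rw [hf]; simp only; rw [ubd_apply hB (n := n + 1 - j) (by omega)]; ring
  have hsg : Summable g := by
    apply summable_of_ne_finset_zero (s := Finset.Icc (n + 1 - b) a)
    intro j hj
    rw [Finset.mem_Icc] at hj; push_neg at hj
    by_cases h1 : a < j
    · rw [hg]; simp only; rw [ubd_apply hA h1]; ring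
    · rw [hg]; simp only; rw [ubd_apply hB (n := n + 1 - j) (by omega)]; ring
  have h1 : mul (dP A) B n x = ∑' j, f j := by
    have e : ∀ i : ℤ, dP A i x * B (n - i) x = f ((Equiv.addRight (1:ℤ)) i) := by
      intro i
      show ((i + 1 : ℤ) : ℝ) * A (i + 1) x * B (n - i) x
        = ((i + 1 : ℤ) : ℝ) * A (i + 1) x * B (n + 1 - (i + 1)) x
      · ring_nf
    unfold DMKP.mul
    rw [tsum_congr e]
    exact (Equiv.addRight (1:ℤ)).tsum_eq f
  have h2 : mul A (dP B) n x = ∑' j, g j := by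
    unfold DMKP.mul
    apply tsum_congr
    intro i
    show A i x * (((n - i + 1 : ℤ) : ℝ) * B (n - i + 1) x) = _
    have : n - i + 1 = n + 1 - i := by ring
    rw [this, hg]
    push_cast
    ring
  have h3 : dP (mul A B) n x
      = ∑' j, (((n + 1 : ℤ) : ℝ) * (A j x * B (n + 1 - j) x)) := by
    show ((n + 1 : ℤ) : ℝ) * mul A B (n + 1) x = _
    unfold DMKP.mul
    rw [← tsum_mul_left]
  rw [h1, h2, h3, ← Summable.tsum_add hsf hsg]
  apply tsum_congr
  intro j
  rw [hf, hg]
  push_cast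
  ring

lemma pascal_sum (k : ℕ) (F : ℕ → ℕ → ℝ) :
    ∑ p ∈ Finset.range (k+1), (k.choose p : ℝ) * (F (p+1) (k-p) + F p (k-p+1))
      = ∑ p ∈ Finset.range (k+2), ((k+1).choose p : ℝ) * F p (k+1-p) := by
  rw [Finset.sum_range_succ' (fun p => ((k+1).choose p : ℝ) * F p (k+1-p)) (k+1)]
  have hrhs : ∀ j ∈ Finset.range (k+1),
      (((k+1).choose (j+1) : ℕ) : ℝ) * F (j+1) (k+1-(j+1))
      = (k.choose j : ℝ) * F (j+1) (k-j) + (k.choose (j+1) : ℝ) * F (j+1) (k-j) := by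
    intro j _
    have h1 : (k+1).choose (j+1) = k.choose j + k.choose (j+1) := Nat.choose_succ_succ k j
    have h2 : k + 1 - (j+1) = k - j := by omega
    rw [h1, h2]
    push_cast
    ring
  rw [Finset.sum_congr rfl hrhs]
  have hlhs : ∀ p ∈ Finset.range (k+1),
      (k.choose p : ℝ) * (F (p+1) (k-p) + F p (k-p+1))
      = (k.choose p : ℝ) * F (p+1) (k-p) + (k.choose p : ℝ) * F p (k+1-p) := by
    intro p hp
    rw [Finset.mem_range] at hp
    have : k - p + 1 = k + 1 - p := by omega
    rw [this]
    ring
  rw [Finset.sum_congr rfl hlhs, Finset.sum_add_distrib, Finset.sum_add_distrib]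
  have hsecond : ∑ p ∈ Finset.range (k+1), (k.choose p : ℝ) * F p (k+1-p)
      = ∑ j ∈ Finset.range (k+1), (k.choose (j+1) : ℝ) * F (j+1) (k-j)
        + (k.choose 0 : ℝ) * F 0 (k+1) := by
    have hext : ∑ p ∈ Finset.range (k+2), (k.choose p : ℝ) * F p (k+1-p)
        = ∑ p ∈ Finset.range (k+1), (k.choose p : ℝ) * F p (k+1-p) := by
      rw [Finset.sum_range_succ, Nat.choose_succ_self]
      simp
    rw [← hext, Finset.sum_range_succ' (fun p => (k.choose p : ℝ) * F p (k+1-p)) (k+1)]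
    congr 1
    apply Finset.sum_congr rfl
    intro j _
    have : k + 1 - (j + 1) = k - j := by omega
    rw [this]
  rw [hsecond]
  simp only [Nat.choose_zero_right, Nat.cast_one, one_mul, Nat.sub_zero]
  ring

lemma dP_iter_mul [NeZero N] {A B : Coeffs N} {a b : ℤ} (hA : UBd A a) (hB : UBd B b)
    (k : ℕ) (n : ℤ) (x : Fin N → ℝ) :
    dP^[k] (mul A B) n x
      = ∑ p ∈ Finset.range (k+1), (k.choose p : ℝ)
          * mul (dP^[p] A) (dP^[k-p] B) n x := by
  induction k generalizing n with
  | zero => simp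
  | succ k ih =>
      rw [Function.iterate_succ_apply']
      show ((n + 1 : ℤ) : ℝ) * dP^[k] (mul A B) (n+1) x = _
      rw [ih (n+1), Finset.mul_sum]
      have hterm : ∀ p ∈ Finset.range (k+1),
          ((n + 1 : ℤ) : ℝ) * ((k.choose p : ℝ) * mul (dP^[p] A) (dP^[k-p] B) (n+1) x)
          = (k.choose p : ℝ) * (mul (dP^[p+1] A) (dP^[k-p] B) n x
              + mul (dP^[p] A) (dP^[(k-p)+1] B) n x) := by
        intro p _
        have hd : dP (mul (dP^[p] A) (dP^[k-p] B)) n x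
            = ((n + 1 : ℤ) : ℝ) * mul (dP^[p] A) (dP^[k-p] B) (n+1) x := rfl
        rw [show ((n + 1 : ℤ) : ℝ) * ((k.choose p : ℝ) * mul (dP^[p] A) (dP^[k-p] B) (n+1) x)
            = (k.choose p : ℝ) * dP (mul (dP^[p] A) (dP^[k-p] B)) n x by rw [hd]; ring]
        rw [dP_mul (ubd_dP_iter hA p) (ubd_dP_iter hB (k-p)) n x,
          ← Function.iterate_succ_apply' dP p A, ← Function.iterate_succ_apply' dP (k-p) B]
      rw [Finset.sum_congr rfl hterm]
      have := pascal_sum k (fun p q => mul (dP^[p] A) (dP^[q] B) n x)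
      simpa using this

/-- triangle sum to square sum -/
lemma tri_sq (T : ℕ) (F : ℕ → ℕ → ℝ) (hF : ∀ p q, T ≤ p + q → F p q = 0) :
    ∑ k ∈ Finset.range T, ∑ p ∈ Finset.range (k+1), F p (k-p)
      = ∑ p ∈ Finset.range T, ∑ q ∈ Finset.range T, F p q := by
  have h1 : ∀ p ∈ Finset.range T, ∑ q ∈ Finset.range T, F p q
      = ∑ q ∈ Finset.range (T-p), F p q := by
    intro p hp
    symm
    apply Finset.sum_subset
    · intro q hq; rw [Finset.mem_range] at *; omega
    · intro q _ hq; rw [Finset.mem_range] at hq; exact hF p q (by omega)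
  rw [Finset.sum_congr rfl h1]
  rw [Finset.sum_sigma' (Finset.range T) (fun k => Finset.range (k+1)) (fun k p => F p (k-p)),
    Finset.sum_sigma' (Finset.range T) (fun p => Finset.range (T-p)) (fun p q => F p q)]
  apply Finset.sum_nbij' (i := fun z => (⟨z.2, z.1 - z.2⟩ : Σ _ : ℕ, ℕ))
    (j := fun z => (⟨z.1 + z.2, z.1⟩ : Σ _ : ℕ, ℕ))
  · intro z hz
    simp only [Finset.mem_sigma, Finset.mem_range] at *
    omega
  · intro z hz
    simp only [Finset.mem_sigma, Finset.mem_range] at *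
    omega
  · intro z hz
    simp only [Finset.mem_sigma, Finset.mem_range] at hz
    obtain ⟨k, p⟩ := z
    simp only at *
    congr 1 <;> omega
  · intro z hz
    simp only [Finset.mem_sigma, Finset.mem_range] at hz
    obtain ⟨p, q⟩ := z
    simp only at *
    congr 1 <;> omega
  · intro z _
    rfl

end Aux5
end DMKP
-- Part 6 : expAd is a ring morphism
namespace DMKP
section Aux6
open Finset
variable {N : ℕ} [NeZero N]

/-- raw finite-sum formula. -/
lemma expAd_eq_sum_raw {A : Coeffs N} {a : ℤ} (hA : UBd A a)
    (φ : (Fin N → ℝ) → ℝ) (n : ℤ) {T : ℕ} (hT : ∀ k : ℕ, T ≤ k → a < n + k) (x : Fin N → ℝ) :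
    expAdNeg φ A n x = ∑ k ∈ Finset.range T,
      (pd 0 φ x) ^ k / (Nat.factorial k : ℝ) * (dP^[k] A) n x := by
  unfold expAdNeg
  apply tsum_eq_sum
  intro k hk
  rw [Finset.mem_range, not_lt] at hk
  rw [dP_iter, ubd_apply hA (hT k hk)]
  ring

lemma mul_dP_vanish {A B : Coeffs N} {a b : ℤ} (hA : UBd A a) (hB : UBd B b)
    {p q : ℕ} {n : ℤ} (h : a + b < n + p + q) (x : Fin N → ℝ) :
    mul (dP^[p] A) (dP^[q] B) n x = 0 := by
  unfold DMKP.mul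
  have hz : ∀ i : ℤ, (dP^[p] A) i x * (dP^[q] B) (n - i) x = 0 := by
    intro i
    rw [dP_iter, dP_iter]
    by_cases h1 : a < i + p
    · rw [ubd_apply hA h1]; ring
    · rw [ubd_apply hB (n := n - i + q) (by omega)]; ring
  rw [tsum_congr hz]
  exact tsum_zero

lemma expAd_mul {A B : Coeffs N} {a b : ℤ} (hA : UBd A a) (hB : UBd B b)
    (φ : (Fin N → ℝ) → ℝ) (n : ℤ) (x : Fin N → ℝ) :
    expAdNeg φ (mul A B) n x = mul (expAdNeg φ A) (expAdNeg φ B) n x := by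
  set sx : ℝ := pd 0 φ x with hsx
  set T : ℕ := ((a + b) - n).toNat + 1 with hT_def
  have htoNat := Int.self_le_toNat (a + b - n)
  have hT : ∀ k : ℕ, T ≤ k → a + b < n + k := by intro k hk; omega
  set G : ℕ → ℕ → ℝ := fun p q => sx ^ p / (Nat.factorial p : ℝ)
      * (sx ^ q / (Nat.factorial q : ℝ)) * mul (dP^[p] A) (dP^[q] B) n x with hG
  -- LHS
  have hL : expAdNeg φ (mul A B) n x = ∑ p ∈ Finset.range T, ∑ q ∈ Finset.range T, G p q := by
    rw [expAd_eq_sum_raw (ubd_mul hA hB) φ n hT x]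
    have h1 : ∀ k ∈ Finset.range T,
        sx ^ k / (Nat.factorial k : ℝ) * (dP^[k] (mul A B)) n x
        = ∑ p ∈ Finset.range (k+1), G p (k - p) := by
      intro k _
      rw [dP_iter_mul hA hB k n x, Finset.mul_sum]
      apply Finset.sum_congr rfl
      intro p hp
      rw [Finset.mem_range] at hp
      have hpq : p + (k - p) = k := by omega
      have key : ∀ q : ℕ, sx ^ (p+q) / (Nat.factorial (p+q) : ℝ)
          * (((p+q).choose p : ℝ) * mul (dP^[p] A) (dP^[q] B) n x) = G p q := by
        intro q
        rw [hG]
        beta_reduce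
        have hfac : ((p+q).choose p : ℝ) * (Nat.factorial p : ℝ) * (Nat.factorial q : ℝ)
            = (Nat.factorial (p+q) : ℝ) := by
          have h0 := Nat.choose_mul_factorial_mul_factorial (Nat.le_add_right p q)
          rw [Nat.add_sub_cancel_left] at h0
          exact_mod_cast congrArg (fun (z : ℕ) => (z : ℝ)) h0
        have h2 : (Nat.factorial (p+q) : ℝ) ≠ 0 := Nat.cast_ne_zero.mpr (Nat.factorial_ne_zero _)
        have h3 : (Nat.factorial p : ℝ) ≠ 0 := Nat.cast_ne_zero.mpr (Nat.factorial_ne_zero _)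
        have h4 : (Nat.factorial q : ℝ) ≠ 0 := Nat.cast_ne_zero.mpr (Nat.factorial_ne_zero _)
        rw [pow_add]
        field_simp
        rw [← hfac]
        ring
      calc sx ^ k / (Nat.factorial k : ℝ) * ((k.choose p : ℝ) * mul (dP^[p] A) (dP^[k-p] B) n x)
          = sx ^ (p + (k-p)) / (Nat.factorial (p + (k-p)) : ℝ)
            * (((p + (k-p)).choose p : ℝ) * mul (dP^[p] A) (dP^[k-p] B) n x) := by rw [hpq]
        _ = G p (k - p) := key (k - p)
    rw [Finset.sum_congr rfl h1]
    apply tri_sq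
    intro p q hpq
    rw [hG]
    beta_reduce
    have : mul (dP^[p] A) (dP^[q] B) n x = 0 :=
      mul_dP_vanish hA hB (by have := hT (p+q) hpq; omega) x
    rw [this]
    ring
  -- RHS
  have hR : mul (expAdNeg φ A) (expAdNeg φ B) n x
      = ∑ i ∈ Finset.Icc (n - b) a, ∑ p ∈ Finset.range T, ∑ q ∈ Finset.range T,
          (cc i p / (Nat.factorial p : ℝ) * (sx ^ p * A (i + p) x))
          * (cc (n-i) q / (Nat.factorial q : ℝ) * (sx ^ q * B (n - i + q) x)) := by
    rw [mul_eq_sum (ubd_expAdNeg hA φ) (ubd_expAdNeg hB φ) n x]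
    apply Finset.sum_congr rfl
    intro i hi
    rw [Finset.mem_Icc] at hi
    have hTA : ∀ p : ℕ, T ≤ p → a < i + p := by intro p hp; omega
    have hTB : ∀ q : ℕ, T ≤ q → b < (n - i) + q := by intro q hq; omega
    rw [congrFun (expAd_eq_sum hA φ i hTA) x, congrFun (expAd_eq_sum hB φ (n-i) hTB) x,
      Finset.sum_mul_sum]
  rw [hL, hR]
  -- expand G and swap sums
  have hGexp : ∀ p ∈ Finset.range T, ∀ q ∈ Finset.range T, G p q
      = ∑ i ∈ Finset.Icc (n - b) a,
          (cc i p / (Nat.factorial p : ℝ) * (sx ^ p * A (i + p) x))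
          * (cc (n-i) q / (Nat.factorial q : ℝ) * (sx ^ q * B (n - i + q) x)) := by
    intro p _ q _
    rw [hG]
    beta_reduce
    rw [mul_eq_sum (ubd_dP_iter hA p) (ubd_dP_iter hB q) n x, Finset.mul_sum]
    apply Finset.sum_congr rfl
    intro i _
    rw [dP_iter, dP_iter]
    ring
  calc ∑ p ∈ Finset.range T, ∑ q ∈ Finset.range T, G p q
      = ∑ p ∈ Finset.range T, ∑ q ∈ Finset.range T, ∑ i ∈ Finset.Icc (n - b) a,
          (cc i p / (Nat.factorial p : ℝ) * (sx ^ p * A (i + p) x))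
          * (cc (n-i) q / (Nat.factorial q : ℝ) * (sx ^ q * B (n - i + q) x)) := by
        apply Finset.sum_congr rfl
        intro p hp
        exact Finset.sum_congr rfl (fun q hq => hGexp p hp q hq)
    _ = ∑ i ∈ Finset.Icc (n - b) a, ∑ p ∈ Finset.range T, ∑ q ∈ Finset.range T,
          (cc i p / (Nat.factorial p : ℝ) * (sx ^ p * A (i + p) x))
          * (cc (n-i) q / (Nat.factorial q : ℝ) * (sx ^ q * B (n - i + q) x)) := by
        exact (Finset.sum_congr rfl (fun p _ => Finset.sum_comm)).trans Finset.sum_comm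

lemma expAd_one' (φ : (Fin N → ℝ) → ℝ) (n : ℤ) (x : Fin N → ℝ) :
    expAdNeg φ (one' : Coeffs N) n x = one' n x := by
  unfold expAdNeg
  have h1 : ∀ k : ℕ, (pd 0 φ x) ^ k / (Nat.factorial k : ℝ) * (dP^[k] one') n x
      = (pd 0 φ x) ^ k / (Nat.factorial k : ℝ) * (cc n k * one' (n + k) x) := by
    intro k; rw [dP_iter]
  rw [tsum_congr h1]
  rcases lt_trichotomy n 0 with hn | hn | hn
  · have hz : ∀ k : ℕ, (pd 0 φ x) ^ k / (Nat.factorial k : ℝ)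
        * (cc n k * (one' : Coeffs N) (n + k) x) = 0 := by
      intro k
      by_cases h : n + (k : ℤ) = 0
      · rw [cc_eq_zero hn (by omega)]; ring
      · have h2 : (one' : Coeffs N) (n + (k:ℤ)) = 0 := by unfold one'; rw [if_neg h]
        rw [h2]
        show _ * (_ * (0:ℝ)) = 0
        ring
    rw [tsum_congr hz, tsum_zero]
    have h3 : (one' : Coeffs N) n = 0 := by unfold one'; rw [if_neg (by omega)]
    rw [h3]
    rfl
  · subst hn
    have hz : ∀ (k : ℕ), k ≠ 0 → (pd 0 φ x) ^ k / (Nat.factorial k : ℝ)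
        * (cc 0 k * (one' : Coeffs N) ((0:ℤ) + k) x) = 0 := by
      intro k hk
      have h0 : ((0:ℤ) + (k:ℤ)) ≠ 0 := by omega
      have h2 : (one' : Coeffs N) ((0:ℤ) + (k:ℤ)) = 0 := by unfold one'; rw [if_neg h0]
      rw [h2]
      show _ * (_ * (0:ℝ)) = 0
      ring
    rw [tsum_eq_single 0 hz]
    simp [one', cc_zero]
  · have hz : ∀ k : ℕ, (pd 0 φ x) ^ k / (Nat.factorial k : ℝ)
        * (cc n k * (one' : Coeffs N) (n + k) x) = 0 := by
      intro k
      have h2 : (one' : Coeffs N) (n + (k:ℤ)) = 0 := by unfold one'; rw [if_neg (by omega)]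
      rw [h2]
      show _ * (_ * (0:ℝ)) = 0
      ring
    rw [tsum_congr hz, tsum_zero]
    have h3 : (one' : Coeffs N) n = 0 := by unfold one'; rw [if_neg (by omega)]
    rw [h3]
    rfl

lemma expAd_powC {L : Coeffs N} {m : ℤ} (hL : UBd L m) (φ : (Fin N → ℝ) → ℝ) (k : ℕ) :
    powC (expAdNeg φ L) k = expAdNeg φ (powC L k) := by
  induction k with
  | zero =>
      funext n x
      exact (expAd_one' φ n x).symm
  | succ k ih =>
      funext n x
      show mul (expAdNeg φ L) (powC (expAdNeg φ L) k) n x = _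
      rw [ih]
      exact (expAd_mul hL (ubd_powC hL k) φ n x).symm

end Aux6
end DMKP
-- Part 7 : Poisson bracket lemmas
namespace DMKP
section Aux7
open Finset
variable {N : ℕ} [NeZero N]

lemma mul_sub_left {A1 A2 B : Coeffs N} {a1 a2 b : ℤ} (h1 : UBd A1 a1) (h2 : UBd A2 a2)
    (hB : UBd B b) (n : ℤ) (x : Fin N → ℝ) :
    mul (fun i x => A1 i x - A2 i x) B n x = mul A1 B n x - mul A2 B n x := by
  unfold DMKP.mul
  rw [tsum_congr (fun i => show (A1 i x - A2 i x) * B (n-i) x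
    = A1 i x * B (n-i) x - A2 i x * B (n-i) x from by ring)]
  exact Summable.tsum_sub (summable_mul h1 hB n x) (summable_mul h2 hB n x)

lemma pb_sub_left {B1 B2 C : Coeffs N} {b1 b2 c : ℤ} (h1 : UBd B1 b1) (h2 : UBd B2 b2)
    (hC : UBd C c) (s1 : SmoothCoeffs B1) (s2 : SmoothCoeffs B2) (n : ℤ) (x : Fin N → ℝ) :
    pb (fun n x => B1 n x - B2 n x) C n x = pb B1 C n x - pb B2 C n x := by
  unfold pb
  have hP : mul (dP fun n x => B1 n x - B2 n x) (dX C) n x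
      = mul (dP B1) (dX C) n x - mul (dP B2) (dX C) n x := by
    have e : ∀ i (y : Fin N → ℝ), dP (fun n x => B1 n x - B2 n x) i y
        = dP B1 i y - dP B2 i y := by
      intro i y
      show ((i+1:ℤ):ℝ) * (B1 (i+1) y - B2 (i+1) y) = _
      unfold DMKP.dP
      ring
    rw [mul_congr (A' := fun i y => dP B1 i y - dP B2 i y) e (fun _ _ => rfl) n x]
    exact mul_sub_left (ubd_dP h1) (ubd_dP h2) (ubd_dT hC 0) n x
  have hX : mul (dX fun n x => B1 n x - B2 n x) (dP C) n x
      = mul (dX B1) (dP C) n x - mul (dX B2) (dP C) n x := by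
    have e : ∀ i (y : Fin N → ℝ), dX (fun n x => B1 n x - B2 n x) i y
        = dX B1 i y - dX B2 i y := by
      intro i y
      show pd 0 (fun x => B1 i x - B2 i x) y = _
      rw [pd_sub (((s1 i).differentiable (by simp)) y) (((s2 i).differentiable (by simp)) y)]
      rfl
    rw [mul_congr (A' := fun i y => dX B1 i y - dX B2 i y) e (fun _ _ => rfl) n x]
    exact mul_sub_left (ubd_dT h1 0) (ubd_dT h2 0) (ubd_dP hC) n x
  rw [hP, hX]
  ring

lemma dP_const (f : (Fin N → ℝ) → ℝ) (i : ℤ) (x : Fin N → ℝ) : dP (const f) i x = 0 := by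
  show ((i+1:ℤ):ℝ) * const f (i+1) x = 0
  by_cases h : i + 1 = 0
  · rw [h]; simp
  · unfold const
    rw [if_neg h]
    show _ * (0:ℝ) = 0
    ring

lemma pb_const (f : (Fin N → ℝ) → ℝ) (C : Coeffs N) (n : ℤ) (x : Fin N → ℝ) :
    pb (const f) C n x = -(pd 0 f x * dP C n x) := by
  unfold pb
  have h1 : mul (dP (const f)) (dX C) n x = 0 := by
    unfold DMKP.mul
    rw [tsum_congr (fun i => show dP (const f) i x * dX C (n-i) x = 0 from by
      rw [dP_const]; ring)]
    exact tsum_zero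
  have h2 : mul (dX (const f)) (dP C) n x = pd 0 f x * dP C n x := by
    unfold DMKP.mul
    rw [tsum_eq_single 0 ?hz]
    · show pd 0 (const f 0) x * dP C (n - 0) x = _
      have : const f (0:ℤ) = f := by unfold const; rw [if_pos rfl]
      rw [this, sub_zero]
    · intro i hi
      have : const f i = 0 := by unfold const; rw [if_neg hi]
      show pd 0 (const f i) x * dP C (n - i) x = 0
      rw [this, pd_zero]
      ring
  rw [h1, h2]
  ring

lemma ubd_pb {A B : Coeffs N} {a b : ℤ} (hA : UBd A a) (hB : UBd B b) :
    UBd (pb A B) (a + b) :=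
  ubd_sub (ubd_mul (ubd_dP hA) (ubd_dT hB 0)) (ubd_mul (ubd_dT hA 0) (ubd_dP hB))

/-- Truncation vs conjugation. -/
lemma trunc_expAd {M : Coeffs N} {mM : ℤ} (hM : UBd M mM) (φ : (Fin N → ℝ) → ℝ)
    (n : ℤ) (x : Fin N → ℝ) :
    truncGe 1 (expAdNeg φ M) n x
      = expAdNeg φ (truncGe 0 M) n x - const (evalAtPhiX M φ) n x := by
  rcases lt_trichotomy n 0 with hn | hn | hn
  · have hL : truncGe 1 (expAdNeg φ M) n x = 0 := by
      unfold truncGe; rw [if_neg (by omega)]; rfl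
    have hc : const (evalAtPhiX M φ) n x = 0 := by
      unfold const; rw [if_neg (by omega)]; rfl
    have hE : expAdNeg φ (truncGe 0 M) n x = 0 := by
      unfold expAdNeg
      rw [tsum_congr (fun k => show (pd 0 φ x) ^ k / (Nat.factorial k : ℝ)
          * (dP^[k] (truncGe 0 M)) n x = 0 from ?_)]
      · exact tsum_zero
      · rw [dP_iter]
        by_cases h : (0:ℤ) ≤ n + k
        · rw [cc_eq_zero hn h]; ring
        · have : truncGe 0 M (n + (k:ℤ)) = 0 := by unfold truncGe; rw [if_neg h]
          rw [this]
          show _ * (_ * (0:ℝ)) = 0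
          ring
    rw [hL, hE, hc]
    ring
  · subst hn
    have hL : truncGe 1 (expAdNeg φ M) 0 x = 0 := by
      unfold truncGe; rw [if_neg (by omega)]; rfl
    have hc : const (evalAtPhiX M φ) (0:ℤ) x = evalAtPhiX M φ x := by
      unfold const; rw [if_pos rfl]
    have hE : expAdNeg φ (truncGe 0 M) 0 x = evalAtPhiX M φ x := by
      unfold expAdNeg evalAtPhiX
      apply tsum_congr
      intro k
      rw [dP_iter, cc_nat]
      have h0 : truncGe 0 M ((0:ℤ) + (k:ℕ)) = M (k:ℤ) := by
        unfold truncGe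
        rw [if_pos (by omega), zero_add]
      rw [h0]
      have : (Nat.factorial k : ℝ) ≠ 0 := Nat.cast_ne_zero.mpr (Nat.factorial_ne_zero _)
      field_simp
    rw [hL, hE, hc]
    ring
  · have hL : truncGe 1 (expAdNeg φ M) n x = expAdNeg φ M n x := by
      unfold truncGe; rw [if_pos (by omega)]
    have hc : const (evalAtPhiX M φ) n x = 0 := by
      unfold const; rw [if_neg (by omega)]; rfl
    have hE : expAdNeg φ (truncGe 0 M) n x = expAdNeg φ M n x := by
      unfold expAdNeg
      apply tsum_congr
      intro k
      rw [dP_iter, dP_iter]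
      have h0 : truncGe 0 M (n + (k:ℕ)) = M (n + (k:ℕ)) := by
        unfold truncGe; rw [if_pos (by omega)]
      rw [h0]
    rw [hL, hE, hc]
    ring

/-- `e^{-ad φ}` is a Poisson morphism. -/
lemma pb_expAd {A B : Coeffs N} {a b : ℤ} (hA : UBd A a) (hB : UBd B b)
    (sA : SmoothCoeffs A) (sB : SmoothCoeffs B) {φ : (Fin N → ℝ) → ℝ}
    (hφ : ContDiff ℝ (⊤ : ℕ∞) φ) (n : ℤ) (x : Fin N → ℝ) :
    pb (expAdNeg φ A) (expAdNeg φ B) n x = expAdNeg φ (pb A B) n x := by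
  have hEdPA : UBd (expAdNeg φ (dP A)) a := ubd_expAdNeg (ubd_dP hA) φ
  have hEdTA : UBd (expAdNeg φ (dT 0 A)) a := ubd_expAdNeg (ubd_dT hA 0) φ
  have hEdPB : UBd (expAdNeg φ (dP B)) b := ubd_expAdNeg (ubd_dP hB) φ
  have hEdTB : UBd (expAdNeg φ (dT 0 B)) b := ubd_expAdNeg (ubd_dT hB 0) φ
  set sx : ℝ := pd 0 (pd 0 φ) x with hsx
  have hP : mul (dP (expAdNeg φ A)) (dX (expAdNeg φ B)) n x
      = mul (expAdNeg φ (dP A)) (expAdNeg φ (dT 0 B)) n x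
        + sx * mul (expAdNeg φ (dP A)) (expAdNeg φ (dP B)) n x := by
    unfold DMKP.mul
    rw [tsum_congr (fun i => show dP (expAdNeg φ A) i x * dX (expAdNeg φ B) (n-i) x
      = expAdNeg φ (dP A) i x * expAdNeg φ (dT 0 B) (n-i) x
        + sx * (expAdNeg φ (dP A) i x * expAdNeg φ (dP B) (n-i) x) from ?_)]
    · rw [Summable.tsum_add (summable_mul hEdPA hEdTB n x)
        (((summable_mul hEdPA hEdPB n x)).mul_left sx), tsum_mul_left]
    · rw [dP_expAd φ A i x]
      have : dX (expAdNeg φ B) (n-i) x = expAdNeg φ (dT 0 B) (n-i) x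
          + sx * expAdNeg φ (dP B) (n-i) x := pd_expAd hB sB hφ 0 (n-i) x
      rw [this]
      ring
  have hX : mul (dX (expAdNeg φ A)) (dP (expAdNeg φ B)) n x
      = mul (expAdNeg φ (dT 0 A)) (expAdNeg φ (dP B)) n x
        + sx * mul (expAdNeg φ (dP A)) (expAdNeg φ (dP B)) n x := by
    unfold DMKP.mul
    rw [tsum_congr (fun i => show dX (expAdNeg φ A) i x * dP (expAdNeg φ B) (n-i) x
      = expAdNeg φ (dT 0 A) i x * expAdNeg φ (dP B) (n-i) x
        + sx * (expAdNeg φ (dP A) i x * expAdNeg φ (dP B) (n-i) x) from ?_)]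
    · rw [Summable.tsum_add (summable_mul hEdTA hEdPB n x)
        (((summable_mul hEdPA hEdPB n x)).mul_left sx), tsum_mul_left]
    · rw [dP_expAd φ B (n-i) x]
      have : dX (expAdNeg φ A) i x = expAdNeg φ (dT 0 A) i x
          + sx * expAdNeg φ (dP A) i x := pd_expAd hA sA hφ 0 i x
      rw [this]
      ring
  show mul (dP (expAdNeg φ A)) (dX (expAdNeg φ B)) n x
      - mul (dX (expAdNeg φ A)) (dP (expAdNeg φ B)) n x = _
  rw [hP, hX]
  have hm1 : mul (expAdNeg φ (dP A)) (expAdNeg φ (dT 0 B)) n x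
      = expAdNeg φ (mul (dP A) (dT 0 B)) n x := (expAd_mul (ubd_dP hA) (ubd_dT hB 0) φ n x).symm
  have hm2 : mul (expAdNeg φ (dT 0 A)) (expAdNeg φ (dP B)) n x
      = expAdNeg φ (mul (dT 0 A) (dP B)) n x := (expAd_mul (ubd_dT hA 0) (ubd_dP hB) φ n x).symm
  rw [hm1, hm2]
  have hsub : expAdNeg φ (mul (dP A) (dT 0 B)) n x - expAdNeg φ (mul (dT 0 A) (dP B)) n x
      = expAdNeg φ (fun n x => mul (dP A) (dT 0 B) n x - mul (dT 0 A) (dP B) n x) n x :=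
    (expAd_sub (ubd_mul (ubd_dP hA) (ubd_dT hB 0)) (ubd_mul (ubd_dT hA 0) (ubd_dP hB)) φ n x).symm
  have hpb : (pb A B : Coeffs N)
      = fun n x => mul (dP A) (dT 0 B) n x - mul (dT 0 A) (dP B) n x := rfl
  rw [hpb]
  rw [← hsub]
  ring

end Aux7
end DMKP
-- Part 8 : final theorem
namespace DMKP
/-- Theorem 3: with `L̃ = e^{-ad φ}L` and the time variable `T_q`
(`q : Fin N` labels `T_{q+1}`, paired with the exponent `q+1`),
`∂_{T_q}L̃ - {(L̃^q)_{≥1}, L̃}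
  = e^{-ad φ}(∂_{T_q}L - {(L^q)_+, L}) - {∂_{T_q}φ - (L^q)_+|_{P=φ_X}, L̃}`. -/
theorem statement4 {N : ℕ} [NeZero N] (m : ℕ) (L : Coeffs N)
    (hmonic : L (m : ℤ) = fun _ => (1 : ℝ)) (hbd : ∀ n : ℤ, (m : ℤ) < n → L n = 0)
    (hsm : SmoothCoeffs L)
    (φ : (Fin N → ℝ) → ℝ) (hφ : ContDiff ℝ (⊤ : ℕ∞) φ) (q : Fin N) :
    (fun (n : ℤ) (x : Fin N → ℝ) => dT q (expAdNeg φ L) n x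
        - pb (truncGe 1 (powC (expAdNeg φ L) ((q : ℕ) + 1))) (expAdNeg φ L) n x)
      = fun (n : ℤ) (x : Fin N → ℝ) =>
          expAdNeg φ
            (fun n' x' => dT q L n' x' - pb (truncGe 0 (powC L ((q : ℕ) + 1))) L n' x') n x
          - pb (const (fun y => pd q φ y - evalAtPhiX (powC L ((q : ℕ) + 1)) φ y))
              (expAdNeg φ L) n x := by

  have hbd' : UBd L (m : ℤ) := hbd
  set Q : ℕ := (q : ℕ) + 1 with hQ
  set M : Coeffs N := powC L Q with hM_def
  have hMbd : UBd M ((Q:ℤ) * m) := ubd_powC hbd' Q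
  have hMsm : SmoothCoeffs M := sm_powC hbd' hsm Q
  set mM : ℤ := (Q:ℤ) * m with hmM_def
  have hmM : 0 ≤ mM := by positivity
  set c : (Fin N → ℝ) → ℝ := evalAtPhiX M φ with hc_def
  have hc_sm : ContDiff ℝ (⊤ : ℕ∞) c := sm_evalAtPhiX hMbd hMsm hφ
  funext n x
  -- step 1 : powers commute with conjugation
  rw [expAd_powC hbd' φ Q]
  -- step 2 : truncation
  have htr : truncGe 1 (expAdNeg φ M)
      = fun n x => expAdNeg φ (truncGe 0 M) n x - const c n x := by
    funext n x
    exact trunc_expAd hMbd φ n x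
  rw [htr]
  -- step 3 : pb linearity
  have h3 : pb (fun n x => expAdNeg φ (truncGe 0 M) n x - const c n x) (expAdNeg φ L) n x
      = pb (expAdNeg φ (truncGe 0 M)) (expAdNeg φ L) n x
        - pb (const c) (expAdNeg φ L) n x :=
    pb_sub_left (ubd_expAdNeg (ubd_truncGe hMbd 0) φ) (ubd_const c)
      (ubd_expAdNeg hbd' φ)
      (sm_expAdNeg (ubd_truncGe hMbd 0) (sm_truncGe hMsm 0) hφ)
      (sm_const hc_sm) n x
  rw [h3]
  -- step 4 : Poisson morphism
  have h4 : pb (expAdNeg φ (truncGe 0 M)) (expAdNeg φ L) n x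
      = expAdNeg φ (pb (truncGe 0 M) L) n x :=
    pb_expAd (ubd_truncGe hMbd 0) hbd' (sm_truncGe hMsm 0) hsm hφ n x
  rw [h4]
  -- step 5 : pb with const
  have h5 : pb (const c) (expAdNeg φ L) n x
      = -(pd 0 c x * dP (expAdNeg φ L) n x) := pb_const c _ n x
  rw [h5]
  -- step 6 : time derivative of conjugation
  have h6 : dT q (expAdNeg φ L) n x
      = expAdNeg φ (dT q L) n x + pd q (pd 0 φ) x * expAdNeg φ (dP L) n x :=
    pd_expAd hbd' hsm hφ q n x
  rw [h6]
  -- step 7 : RHS linearity of expAd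
  have h7 : expAdNeg φ
        (fun n' x' => dT q L n' x' - pb (truncGe 0 M) L n' x') n x
      = expAdNeg φ (dT q L) n x - expAdNeg φ (pb (truncGe 0 M) L) n x :=
    expAd_sub (ubd_mono (ubd_dT hbd' q) (by omega))
      (ubd_mono (ubd_pb (ubd_truncGe hMbd 0) hbd') (le_refl _)) φ n x
  rw [h7]
  -- step 8 : RHS pb with const
  have h8 : pb (const (fun y => pd q φ y - c y)) (expAdNeg φ L) n x
      = -(pd 0 (fun y => pd q φ y - c y) x * dP (expAdNeg φ L) n x) :=
    pb_const _ _ n x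
  rw [h8]
  have h9 : pd 0 (fun y => pd q φ y - c y) x = pd 0 (pd q φ) x - pd 0 c x :=
    pd_sub (((contDiff_pd hφ q).differentiable (by simp)) x)
      ((hc_sm.differentiable (by simp)) x)
  rw [h9]
  -- step 10 : Schwarz + dP/expAd commute
  have h10 : pd q (pd 0 φ) x = pd 0 (pd q φ) x := pd_comm hφ q 0 x
  have h11 : dP (expAdNeg φ L) n x = expAdNeg φ (dP L) n x := dP_expAd φ L n x
  rw [h10, h11]
  ring


end DMKP
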